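/- arXiv:2604.13033 — 9 statements merged into one kernel-verified Lean document; each statement's English description precedes it below -/
import Mathlib

section
/- Let p = (p_i)_{i≥1} be a probability distribution arranged in non-increasing order, and let m be a natural number with p_1 + ... + p_m ≥ 1 − p_m. Define q by q_i = p_i for i ≤ m, q_{m+1} = 1 − p_1 − ... − p_m, and q_i = 0 for i > m+1. Then q is a probability distribution that is m-partially majorized by p. -/
open scoped BigOperators

/-- Sum of the `k` largest entries of a nonnegative summable sequence,
defined as the supremum of sums over `k`-element index sets. -/
noncomputable def topSum (p : ℕ → ℝ) (k : ℕ) : ℝ :=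
  sSup {s : ℝ | ∃ t : Finset ℕ, t.card = k ∧ s = ∑ i ∈ t, p i}

/-- `p` is a probability distribution on ℕ. -/
def IsDistrib (p : ℕ → ℝ) : Prop :=
  (∀ i, 0 ≤ p i) ∧ Summable p ∧ ∑' i, p i = 1

/-- `p` m-partially majorizes `q`. -/
def PMaj (m : ℕ) (p q : ℕ → ℝ) : Prop :=
  ∀ k ≤ m, topSum q k ≤ topSum p k

/-- `p` majorizes `q`. -/
def Maj (p q : ℕ → ℝ) : Prop :=
  ∀ k, topSum q k ≤ topSum p k

lemma fin_le_orderEmb {k : ℕ} (e : Fin k ↪o ℕ) (i : Fin k) : (i : ℕ) ≤ e i := by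
  obtain ⟨n, hn⟩ := i
  induction n with
  | zero => exact Nat.zero_le _
  | succ j ih =>
    have hj : j < k := by omega
    have h1 : e ⟨j, hj⟩ < e ⟨j + 1, hn⟩ := e.strictMono (by simp [Fin.lt_def])
    have h2 := ih hj
    simp only at h2 ⊢
    omega

lemma sum_le_sum_range_of_antitone (f : ℕ → ℝ) (hf : Antitone f) (t : Finset ℕ) :
    ∑ i ∈ t, f i ≤ ∑ i ∈ Finset.range t.card, f i := by
  set k := t.card with hk
  let e := t.orderEmbOfFin hk.symm
  have h1 : ∑ i ∈ t, f i = ∑ i : Fin k, f (e i) := by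
    rw [← Finset.sum_image (f := f) (g := fun i : Fin k => e i)
      (by intro a _ b _ h; exact e.injective h)]
    congr 1
    ext x
    constructor
    · intro hx
      have : x ∈ Set.range e := by
        rw [show Set.range e = (t : Set ℕ) from t.range_orderEmbOfFin hk.symm]
        exact hx
      obtain ⟨i, hi⟩ := this
      exact Finset.mem_image.mpr ⟨i, Finset.mem_univ i, hi⟩
    · intro hx
      obtain ⟨i, _, rfl⟩ := Finset.mem_image.mp hx
      exact t.orderEmbOfFin_mem hk.symm i
  rw [h1, ← Fin.sum_univ_eq_sum_range (fun i => f i) k]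
  exact Finset.sum_le_sum fun i _ => hf (fin_le_orderEmb e i)

theorem truncation_pmaj (p : ℕ → ℝ) (hmono : Antitone p) (hp : IsDistrib p)
    (m : ℕ) (hm : 1 ≤ m)
    (hcond : 1 - p (m - 1) ≤ ∑ i ∈ Finset.range m, p i)
    (q : ℕ → ℝ)
    (hqdef : q = fun i => if i < m then p i
      else if i = m then 1 - ∑ j ∈ Finset.range m, p j else 0) :
    IsDistrib q ∧ PMaj m p q := by
  obtain ⟨hp0, hpsum, hptsum⟩ := hp
  have hpartial : ∀ n, ∑ i ∈ Finset.range n, p i ≤ 1 := fun n => by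
    rw [← hptsum]
    exact Summable.sum_le_tsum _ (fun i _ => hp0 i) hpsum
  have hqm : 0 ≤ 1 - ∑ j ∈ Finset.range m, p j := by linarith [hpartial m]
  have hq0 : ∀ i, 0 ≤ q i := by
    intro i; rw [hqdef]; dsimp only
    split_ifs with h1 h2
    · exact hp0 i
    · exact hqm
    · exact le_refl 0
  have hqlt : ∀ i, i < m → q i = p i := by
    intro i hi; rw [hqdef]; simp [hi]
  have hqeq : q m = 1 - ∑ j ∈ Finset.range m, p j := by
    rw [hqdef]; simp
  have hqgt : ∀ i, m < i → q i = 0 := by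
    intro i hi; rw [hqdef]; dsimp only
    rw [if_neg (by omega), if_neg (by omega)]
  have hqzero : ∀ i ∉ Finset.range (m + 1), q i = 0 := by
    intro i hi
    exact hqgt i (by simpa [Finset.mem_range] using hi)
  have hqsummable : Summable q := summable_of_ne_finset_zero hqzero
  have hqtsum : ∑' i, q i = 1 := by
    rw [tsum_eq_sum hqzero, Finset.sum_range_succ]
    have h1 : ∑ i ∈ Finset.range m, q i = ∑ i ∈ Finset.range m, p i :=
      Finset.sum_congr rfl (fun i hi => hqlt i (Finset.mem_range.mp hi))
    rw [h1, hqeq]; ring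
  refine ⟨⟨hq0, hqsummable, hqtsum⟩, ?_⟩
  have hqanti : Antitone q := by
    apply antitone_nat_of_succ_le
    intro i
    rcases lt_trichotomy (i + 1) m with h | h | h
    · rw [hqlt _ h, hqlt _ (by omega)]
      exact hmono (by omega)
    · have hi : i = m - 1 := by omega
      rw [h, hqeq, hqlt i (by omega), hi]
      linarith
    · rw [hqgt _ h]
      exact hq0 i
  intro k hk
  have hbdd : BddAbove {s : ℝ | ∃ t : Finset ℕ, t.card = k ∧ s = ∑ i ∈ t, p i} := by
    refine ⟨1, ?_⟩
    rintro s ⟨t, ht, rfl⟩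
    rw [← hptsum]
    exact Summable.sum_le_tsum _ (fun i _ => hp0 i) hpsum
  have h1 : topSum q k ≤ ∑ i ∈ Finset.range k, q i := by
    apply csSup_le
    · exact ⟨∑ i ∈ Finset.range k, q i, Finset.range k, Finset.card_range k, rfl⟩
    · rintro s ⟨t, ht, rfl⟩
      calc ∑ i ∈ t, q i ≤ ∑ i ∈ Finset.range t.card, q i :=
            sum_le_sum_range_of_antitone q hqanti t
        _ = ∑ i ∈ Finset.range k, q i := by rw [ht]
  have h2 : ∑ i ∈ Finset.range k, q i = ∑ i ∈ Finset.range k, p i :=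
    Finset.sum_congr rfl (fun i hi => hqlt i (lt_of_lt_of_le (Finset.mem_range.mp hi) hk))
  have h3 : ∑ i ∈ Finset.range k, p i ≤ topSum p k :=
    le_csSup hbdd ⟨Finset.range k, Finset.card_range k, rfl⟩
  calc topSum q k ≤ ∑ i ∈ Finset.range k, q i := h1
    _ = ∑ i ∈ Finset.range k, p i := h2
    _ ≤ topSum p k := h3
end

section
/- Let p = (p_i)_{i≥1} be a probability distribution in non-increasing order and m a natural number. Define q by q_i = p_i for i ≤ m, q_{m+1} = d_m := 1 − ∑_{i=1}^m p_i, q_i = 0 for i > m+1. Then the distribution q (after rearranging in non-increasing order) majorizes every probability distribution r (with entries r_i, not necessarily sorted) such that r_i = p_i for i = 1,...,m and r_{m+1} ≥ p_{m+1}. -/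
open scoped BigOperators

theorem truncation_majorizes (p : ℕ → ℝ) (hmono : Antitone p) (hp : IsDistrib p)
    (m : ℕ) (q : ℕ → ℝ)
    (hqdef : q = fun i => if i < m then p i
      else if i = m then 1 - ∑ j ∈ Finset.range m, p j else 0)
    (r : ℕ → ℝ) (hr : IsDistrib r)
    (hr1 : ∀ i < m, r i = p i) (hr2 : p m ≤ r m) :
    Maj q r := by
  obtain ⟨hpnn, hpsum, hptot⟩ := hp
  obtain ⟨hrnn, hrsum, hrtot⟩ := hr
  have hqm : q m = 1 - ∑ j ∈ Finset.range m, p j := by simp [hqdef]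
  have hqlt : ∀ i < m, q i = p i := by intro i hi; simp [hqdef, hi]
  have hqgt : ∀ i, m < i → q i = 0 := by
    intro i hi
    have h1 : ¬ i < m := by omega
    have h2 : i ≠ m := by omega
    simp [hqdef, h1, h2]
  have hpartial : ∑ j ∈ Finset.range m, p j ≤ 1 := by
    rw [← hptot]
    exact Summable.sum_le_tsum _ (fun i _ => hpnn i) hpsum
  have hqnn : ∀ i, 0 ≤ q i := by
    intro i
    rcases lt_trichotomy i m with h | h | h
    · rw [hqlt i h]; exact hpnn i
    · subst h; rw [hqm]; linarith
    · rw [hqgt i h]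
  -- any finset sum of q is at most the sum over range (m+1)
  have hbound : ∀ t : Finset ℕ, ∑ i ∈ t, q i ≤ ∑ i ∈ Finset.range (m+1), q i := by
    intro t
    calc ∑ i ∈ t, q i ≤ ∑ i ∈ t ∪ Finset.range (m+1), q i :=
          Finset.sum_le_sum_of_subset_of_nonneg Finset.subset_union_left
            (fun i _ _ => hqnn i)
      _ = ∑ i ∈ Finset.range (m+1), q i := by
          refine (Finset.sum_subset Finset.subset_union_right ?_).symm
          intro x _ hx
          rw [Finset.mem_range] at hx
          exact hqgt x (by omega)
  have hbdd : ∀ k, BddAbove {s : ℝ | ∃ t : Finset ℕ, t.card = k ∧ s = ∑ i ∈ t, q i} := by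
    intro k
    exact ⟨∑ i ∈ Finset.range (m+1), q i, by rintro x ⟨t, _, rfl⟩; exact hbound t⟩
  have hinj : ∀ n : ℕ, Function.Injective (fun j : ℕ => m + 1 + j) := by
    intro n a b hab; simpa using hab
  -- zero is attainable: k indices above m
  have hzero : ∀ k, (0:ℝ) ∈ {s : ℝ | ∃ t : Finset ℕ, t.card = k ∧ s = ∑ i ∈ t, q i} := by
    intro k
    refine ⟨(Finset.range k).image (fun j => m + 1 + j), ?_, ?_⟩
    · rw [Finset.card_image_of_injective _ (hinj k), Finset.card_range]
    · rw [Finset.sum_image (fun a _ b _ h => hinj k h)]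
      refine (Finset.sum_eq_zero ?_).symm
      intro j _
      exact hqgt _ (by omega)
  intro k
  unfold topSum
  apply Real.sSup_le
  swap
  · exact le_csSup (hbdd k) (hzero k)
  rintro x ⟨t, htc, rfl⟩
  by_cases hsub : t ⊆ Finset.range m
  · -- all indices below m: r = q on t
    have : ∑ i ∈ t, r i = ∑ i ∈ t, q i := by
      refine Finset.sum_congr rfl (fun i hi => ?_)
      have him : i < m := Finset.mem_range.mp (hsub hi)
      rw [hr1 i him, hqlt i him]
    rw [this]
    exact le_csSup (hbdd k) ⟨t, htc, rfl⟩
  · -- t has an element ≥ m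
    set base := t ∩ Finset.range m with hbase
    have hak : base.card < k := by
      rw [← htc]
      refine Finset.card_lt_card ?_
      constructor
      · exact Finset.inter_subset_left
      · intro hts
        exact hsub (fun i hi => (Finset.mem_inter.mp (hts hi)).2)
    set a := base.card with ha
    set pad := (Finset.range (k - a - 1)).image (fun j => m + 1 + j) with hpad
    have hpadcard : pad.card = k - a - 1 := by
      rw [hpad, Finset.card_image_of_injective _ (hinj 0), Finset.card_range]
    have hpadmem : ∀ i ∈ pad, m < i := by
      intro i hi
      rw [hpad, Finset.mem_image] at hi
      obtain ⟨j, _, rfl⟩ := hi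
      omega
    have hbasemem : ∀ i ∈ base, i < m := by
      intro i hi
      exact Finset.mem_range.mp (Finset.mem_inter.mp hi).2
    set t' := insert m (base ∪ pad) with ht'
    have hdisj : Disjoint base pad := by
      rw [Finset.disjoint_left]
      intro i hib hip
      exact absurd (hpadmem i hip) (by have := hbasemem i hib; omega)
    have hmnot : m ∉ base ∪ pad := by
      intro h
      rcases Finset.mem_union.mp h with h | h
      · exact absurd (hbasemem m h) (lt_irrefl m)
      · exact absurd (hpadmem m h) (lt_irrefl m)
    have ht'card : t'.card = k := by
      rw [ht', Finset.card_insert_of_notMem hmnot, Finset.card_union_of_disjoint hdisj,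
        hpadcard]
      omega
    have hsumt' : ∑ i ∈ t', q i = q m + ∑ i ∈ base, p i := by
      rw [ht', Finset.sum_insert hmnot, Finset.sum_union hdisj]
      have h1 : ∑ i ∈ pad, q i = 0 :=
        Finset.sum_eq_zero (fun i hi => hqgt i (hpadmem i hi))
      have h2 : ∑ i ∈ base, q i = ∑ i ∈ base, p i :=
        Finset.sum_congr rfl (fun i hi => hqlt i (hbasemem i hi))
      rw [h1, h2]; ring
    -- key inequality
    have hsplit : ∑ i ∈ t, r i = ∑ i ∈ base, p i + ∑ i ∈ t \ Finset.range m, r i := by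
      have : ∑ i ∈ base, r i = ∑ i ∈ base, p i :=
        Finset.sum_congr rfl (fun i hi => hr1 i (hbasemem i hi))
      rw [← this, hbase, ← Finset.sum_inter_add_sum_sdiff t (Finset.range m) r]
    have htail : ∑ i ∈ t \ Finset.range m, r i ≤ 1 - ∑ j ∈ Finset.range m, p j := by
      have hdisj2 : Disjoint (Finset.range m) (t \ Finset.range m) :=
        Finset.disjoint_sdiff
      have h1 : ∑ i ∈ Finset.range m ∪ (t \ Finset.range m), r i ≤ 1 := by
        rw [← hrtot]
        exact Summable.sum_le_tsum _ (fun i _ => hrnn i) hrsum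
      rw [Finset.sum_union hdisj2] at h1
      have h2 : ∑ j ∈ Finset.range m, r j = ∑ j ∈ Finset.range m, p j :=
        Finset.sum_congr rfl (fun i hi => hr1 i (Finset.mem_range.mp hi))
      linarith
    have : ∑ i ∈ t, r i ≤ ∑ i ∈ t', q i := by
      rw [hsplit, hsumt', hqm]; linarith
    exact this.trans (le_csSup (hbdd k) ⟨t', ht'card, rfl⟩)
end

section
/- Let p be a probability distribution in non-increasing order with d_k := 1 − ∑_{i=1}^k p_i, let m ∈ ℕ and ε ∈ (0, d_{m+1}), and suppose ℓ := min{k : d_k ≤ ε} exists and ℓ > m+1. Define q by: q_i = p_i for i ≤ m and for m+1 < i < ℓ; q_{m+1} = p_{m+1} + ε; q_ℓ = p_ℓ − ε + d_ℓ; q_i = 0 for i > ℓ. Then q is a probability distribution (all entries nonnegative, summing to 1) and (1/2)∑_{i≥1} |p_i − q_i| = ε. -/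
open scoped BigOperators

theorem rho_m_eps_is_distrib (p : ℕ → ℝ) (hmono : Antitone p) (hp : IsDistrib p)
    (m ℓ : ℕ) (ε : ℝ) (hε0 : 0 < ε)
    (hεd : ε < 1 - ∑ i ∈ Finset.range (m + 1), p i)
    (hℓ1 : 1 - ∑ i ∈ Finset.range ℓ, p i ≤ ε)
    (hℓ2 : ∀ k < ℓ, ε < 1 - ∑ i ∈ Finset.range k, p i)
    (hℓm : m + 1 < ℓ)
    (q : ℕ → ℝ)
    (hqdef : q = fun i => if i < m then p i
      else if i = m then p m + ε
      else if i < ℓ - 1 then p i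
      else if i = ℓ - 1 then p (ℓ - 1) - ε + (1 - ∑ j ∈ Finset.range ℓ, p j)
      else 0) :
    IsDistrib q ∧ (1 / 2) * ∑' i, |p i - q i| = ε := by
  obtain ⟨hp0, hpsum, hp1⟩ := hp
  set S := ∑ i ∈ Finset.range ℓ, p i with hS
  -- values of q
  have hqm : q m = p m + ε := by
    rw [hqdef]; simp
  have hqℓ : q (ℓ - 1) = p (ℓ - 1) - ε + (1 - S) := by
    simp only [hqdef]
    split_ifs with h1 h2 h3 h4 <;> first | rfl | (exfalso; omega)
  have hqtail : ∀ i, ℓ ≤ i → q i = 0 := by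
    intro i hi
    simp only [hqdef]
    split_ifs with h1 h2 h3 h4 <;> first | rfl | (exfalso; omega)
  have hqeq : ∀ x, x < ℓ → x ≠ m → x ≠ ℓ - 1 → q x = p x := by
    intro x hx hxm hxℓ
    simp only [hqdef]
    split_ifs with h1 h2 h3 h4 <;> first | rfl | (exfalso; omega)
  -- splitting the sum S
  have hsplit : S = ∑ i ∈ Finset.range (ℓ - 1), p i + p (ℓ - 1) := by
    have h := Finset.sum_range_succ p (ℓ - 1)
    rw [show ℓ - 1 + 1 = ℓ from by omega] at h
    rw [hS, ← h]
  have hεℓ : ε < 1 - ∑ i ∈ Finset.range (ℓ - 1), p i := hℓ2 (ℓ - 1) (by omega)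
  -- pair subset
  have hmem : ({m, ℓ - 1} : Finset ℕ) ⊆ Finset.range ℓ := by
    intro x hx
    simp only [Finset.mem_insert, Finset.mem_singleton] at hx
    simp only [Finset.mem_range]
    omega
  have hne : m ≠ ℓ - 1 := by omega
  -- tail tsum of p
  have htailp := Summable.sum_add_tsum_nat_add ℓ hpsum
  rw [hp1] at htailp
  have htailp' : ∑' i, p (i + ℓ) = 1 - S := by linarith
  -- nonnegativity of q
  have hq0 : ∀ i, 0 ≤ q i := by
    intro i
    rcases lt_trichotomy i ℓ with hi | hi | hi
    · by_cases him : i = m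
      · rw [him, hqm]; linarith [hp0 m]
      · by_cases hiℓ : i = ℓ - 1
        · rw [hiℓ, hqℓ]; linarith
        · rw [hqeq i hi him hiℓ]; exact hp0 i
    · rw [hqtail i (le_of_eq hi.symm)]
    · rw [hqtail i (le_of_lt hi)]
  -- sum of q over range ℓ
  have hsumq : ∑ i ∈ Finset.range ℓ, q i = 1 := by
    have hd : ∑ i ∈ Finset.range ℓ, (q i - p i)
        = ∑ i ∈ ({m, ℓ - 1} : Finset ℕ), (q i - p i) := by
      refine (Finset.sum_subset hmem ?_).symm
      intro x hx hnx
      simp only [Finset.mem_insert, Finset.mem_singleton, not_or] at hnx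
      rw [hqeq x (Finset.mem_range.mp hx) hnx.1 hnx.2]
      ring
    rw [Finset.sum_pair hne, hqm, hqℓ] at hd
    have := Finset.sum_sub_distrib (s := Finset.range ℓ) (f := q) (g := p)
    rw [hd] at this
    linarith [this]
  have hqsummable : Summable q :=
    summable_of_ne_finset_zero (s := Finset.range ℓ)
      (fun i hi => hqtail i (by simpa [Finset.mem_range, not_lt] using hi))
  have hqtsum : ∑' i, q i = 1 := by
    rw [tsum_eq_sum (s := Finset.range ℓ)
      (fun i hi => hqtail i (by simpa [Finset.mem_range, not_lt] using hi))]
    exact hsumq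
  -- the absolute value function
  have habsm : |p m - q m| = ε := by
    have h : p m - q m = -ε := by rw [hqm]; ring
    rw [h, abs_neg, abs_of_pos hε0]
  have habsℓ : |p (ℓ - 1) - q (ℓ - 1)| = ε - (1 - S) := by
    have h : p (ℓ - 1) - q (ℓ - 1) = ε - (1 - S) := by rw [hqℓ]; ring
    rw [h, abs_of_nonneg (by linarith)]
  have habstail : ∀ i, (fun j => |p j - q j|) (i + ℓ) = p (i + ℓ) := by
    intro i
    simp only
    rw [hqtail (i + ℓ) (by omega), sub_zero, abs_of_nonneg (hp0 _)]
  have hfsum : Summable (fun i => |p i - q i|) := by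
    apply (summable_nat_add_iff ℓ).mp
    have h : (fun i => |p (i + ℓ) - q (i + ℓ)|) = fun i => p (i + ℓ) :=
      funext habstail
    rw [h]
    exact (summable_nat_add_iff ℓ).mpr hpsum
  have hsplitf := Summable.sum_add_tsum_nat_add ℓ hfsum
  have htailf : ∑' i, |p (i + ℓ) - q (i + ℓ)| = 1 - S := by
    rw [tsum_congr habstail]
    exact htailp'
  have hheadf : ∑ i ∈ Finset.range ℓ, |p i - q i| = ε + (ε - (1 - S)) := by
    have hd : ∑ i ∈ Finset.range ℓ, |p i - q i|
        = ∑ i ∈ ({m, ℓ - 1} : Finset ℕ), |p i - q i| := by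
      refine (Finset.sum_subset hmem ?_).symm
      intro x hx hnx
      simp only [Finset.mem_insert, Finset.mem_singleton, not_or] at hnx
      rw [hqeq x (Finset.mem_range.mp hx) hnx.1 hnx.2, sub_self, abs_zero]
    rw [hd, Finset.sum_pair hne, habsm, habsℓ]
  have htotal : ∑' i, |p i - q i| = 2 * ε := by
    rw [← hsplitf, hheadf, htailf]; ring
  refine ⟨⟨hq0, hqsummable, hqtsum⟩, ?_⟩
  rw [htotal]; ring
end

section
/- Let p be a probability distribution in non-increasing order, m ∈ ℕ, ε ∈ [0,1], d_k := 1 − ∑_{i=1}^k p_i, and suppose ε < d_{m+1}. Let ℓ = min{k : d_k ≤ ε} and define q by q_i = p_i for i ≤ m and m+1 < i < ℓ, q_{m+1} = p_{m+1} + ε, q_ℓ = p_ℓ − ε + d_ℓ, q_i = 0 for i > ℓ. Then q majorizes every probability distribution r satisfying r_i = p_i for i = 1,...,m, r_{m+1} ≥ p_{m+1}, and ∑_{i≥1} |p_i − r_i| ≤ 2ε. (Majorization compares non-increasing rearrangements.) -/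
open scoped BigOperators

/-- If all elements of `t` are at least `c` and `t` has `n` elements, then the sum of an
antitone sequence over `t` is at most the sum over `[c, c+n)`. -/
lemma sum_le_Ico_of_antitone (p : ℕ → ℝ) (hp : Antitone p) :
    ∀ (n c : ℕ) (t : Finset ℕ), (∀ i ∈ t, c ≤ i) → t.card = n →
      ∑ i ∈ t, p i ≤ ∑ i ∈ Finset.Ico c (c + n), p i := by
  intro n
  induction n with
  | zero =>
    intro c t h hcard
    simp [Finset.card_eq_zero.mp hcard]
  | succ n ih =>
    intro c t h hcard
    have hne : t.Nonempty := Finset.card_pos.mp (by omega)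
    set M := t.max' hne with hMdef
    have hMmem : M ∈ t := t.max'_mem hne
    have hM : c + n ≤ M := by
      have hsub : t ⊆ Finset.Icc c M := fun i hi =>
        Finset.mem_Icc.mpr ⟨h i hi, Finset.le_max' t i hi⟩
      have := Finset.card_le_card hsub
      rw [Nat.card_Icc] at this
      omega
    have herase : (t.erase M).card = n := by
      rw [Finset.card_erase_of_mem hMmem]; omega
    have h1 : ∑ i ∈ t.erase M, p i ≤ ∑ i ∈ Finset.Ico c (c + n), p i :=
      ih c _ (fun i hi => h i (Finset.erase_subset _ _ hi)) herase
    have h2 : p M ≤ p (c + n) := hp hM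
    rw [← Finset.add_sum_erase t p hMmem, Nat.add_succ,
      Finset.sum_Ico_succ_top (by omega : c ≤ c + n)]
    linarith

theorem rho_m_eps_majorizes (p : ℕ → ℝ) (hmono : Antitone p) (hp : IsDistrib p)
    (m ℓ : ℕ) (ε : ℝ) (hε0 : 0 ≤ ε) (hε1 : ε ≤ 1)
    (hεd : ε < 1 - ∑ i ∈ Finset.range (m + 1), p i)
    (hℓ1 : 1 - ∑ i ∈ Finset.range ℓ, p i ≤ ε)
    (hℓ2 : ∀ k < ℓ, ε < 1 - ∑ i ∈ Finset.range k, p i)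
    (hℓm : m + 1 < ℓ)
    (q : ℕ → ℝ)
    (hqdef : q = fun i => if i < m then p i
      else if i = m then p m + ε
      else if i < ℓ - 1 then p i
      else if i = ℓ - 1 then p (ℓ - 1) - ε + (1 - ∑ j ∈ Finset.range ℓ, p j)
      else 0) :
    ∀ r : ℕ → ℝ, IsDistrib r → (∀ i < m, r i = p i) → p m ≤ r m →
      (∑' i, |p i - r i|) ≤ 2 * ε → Maj q r := by
  obtain ⟨L, rfl⟩ : ∃ L, ℓ = L + 1 := ⟨ℓ - 1, by omega⟩
  simp only [Nat.add_sub_cancel] at hqdef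
  have hmL : m < L := by omega
  intro r hr hrlt hrm htv
  obtain ⟨hp0, hps, hpt⟩ := hp
  obtain ⟨hr0, hrs, hrt⟩ := hr
  -- pointwise description of q
  have hq0 : ∀ i, i < m → q i = p i := by
    intro i hi; simp only [hqdef]; split_ifs <;> first | rfl | omega
  have hqm : q m = p m + ε := by
    simp only [hqdef]; split_ifs <;> first | rfl | omega
  have hqmid : ∀ i, m < i → i < L → q i = p i := by
    intro i h1 h2; simp only [hqdef]; split_ifs <;> first | rfl | omega
  have hqtop : q L = p L - ε + (1 - ∑ j ∈ Finset.range (L + 1), p j) := by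
    simp only [hqdef]; split_ifs <;> first | rfl | omega
  have hqz : ∀ i, L < i → q i = 0 := by
    intro i hi; simp only [hqdef]; split_ifs <;> first | rfl | omega
  have hdL : ε < 1 - ∑ i ∈ Finset.range L, p i := hℓ2 L (by omega)
  have hrangeL : ∑ i ∈ Finset.range (L + 1), p i
      = ∑ i ∈ Finset.range L, p i + p L := Finset.sum_range_succ p L
  have hq0' : ∀ i, 0 ≤ q i := by
    intro i
    simp only [hqdef]
    split_ifs with h1 h2 h3 h4
    · exact hp0 i
    · linarith [hp0 m]
    · exact hp0 i
    · linarith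
    · exact le_refl 0
  -- key computation: the q-mass on [m, L+1) is 1 - ∑_{i<m} p i
  have hqIco : ∑ i ∈ Finset.Ico m (L + 1), q i = 1 - ∑ i ∈ Finset.range m, p i := by
    have d1 : ∑ i ∈ Finset.Ico m (L + 1), q i
        = q m + ∑ i ∈ Finset.Ico (m + 1) L, q i + q L := by
      rw [Finset.sum_Ico_succ_top (by omega : m ≤ L),
        Finset.sum_eq_sum_Ico_succ_bot (by omega : m < L)]
    have d2 : ∑ i ∈ Finset.Ico (m + 1) L, q i = ∑ i ∈ Finset.Ico (m + 1) L, p i :=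
      Finset.sum_congr rfl fun i hi => by
        simp only [Finset.mem_Ico] at hi
        exact hqmid i (by omega) hi.2
    have d3 : ∑ i ∈ Finset.range (L + 1), p i
        = ∑ i ∈ Finset.range m, p i
          + (p m + ∑ i ∈ Finset.Ico (m + 1) L, p i + p L) := by
      rw [Finset.range_eq_Ico,
        ← Finset.sum_Ico_consecutive _ (Nat.zero_le m) (by omega : m ≤ L + 1),
        Finset.sum_Ico_succ_top (by omega : m ≤ L),
        Finset.sum_eq_sum_Ico_succ_bot (by omega : m < L),
        ← Finset.range_eq_Ico]
    rw [d1, d2, hqm, hqtop]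
    linarith [d3]
  -- total variation bound: positive part of r - p sums to at most ε
  have hsub : Summable (fun i => r i - p i) := hrs.sub hps
  have habs : Summable (fun i => |p i - r i|) := (hps.sub hrs).abs
  have hsum0 : ∑' i, (r i - p i) = 0 := by
    rw [Summable.tsum_sub hrs hps, hrt, hpt]; ring
  have hf : Summable (fun i => (|p i - r i| + (r i - p i)) / 2) :=
    (habs.add hsub).div_const 2
  have hft : ∑' i, (|p i - r i| + (r i - p i)) / 2 ≤ ε := by
    rw [tsum_div_const, Summable.tsum_add habs hsub, hsum0]
    linarith
  have hpos : ∀ u : Finset ℕ, ∑ i ∈ u, (r i - p i) ≤ ε := by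
    intro u
    calc ∑ i ∈ u, (r i - p i)
        ≤ ∑ i ∈ u, (|p i - r i| + (r i - p i)) / 2 :=
          Finset.sum_le_sum fun i _ => by
            have := neg_abs_le (p i - r i); linarith
      _ ≤ ∑' i, (|p i - r i| + (r i - p i)) / 2 :=
          Summable.sum_le_tsum u (fun i _ => by
            have := le_abs_self (p i - r i); linarith) hf
      _ ≤ ε := hft
  -- tail bound for r
  have htail : ∀ u : Finset ℕ, (∀ i ∈ u, m ≤ i) →
      ∑ i ∈ u, r i ≤ 1 - ∑ i ∈ Finset.range m, p i := by
    intro u hu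
    have hd : Disjoint u (Finset.range m) := by
      rw [Finset.disjoint_left]
      intro i hi h2
      simp only [Finset.mem_range] at h2
      exact absurd (hu i hi) (by omega)
    have h1 : ∑ i ∈ u ∪ Finset.range m, r i ≤ 1 := by
      rw [← hrt]; exact Summable.sum_le_tsum _ (fun i _ => hr0 i) hrs
    rw [Finset.sum_union hd] at h1
    have h2 : ∑ i ∈ Finset.range m, r i = ∑ i ∈ Finset.range m, p i :=
      Finset.sum_congr rfl fun i hi => hrlt i (by simpa using hi)
    linarith
  -- bddAbove for the q sums
  intro k
  unfold topSum
  have hbdd : BddAbove {s : ℝ | ∃ t : Finset ℕ, t.card = k ∧ s = ∑ i ∈ t, q i} := by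
    refine ⟨∑ i ∈ Finset.range (L + 1), q i, ?_⟩
    rintro x ⟨u, -, rfl⟩
    calc ∑ i ∈ u, q i = ∑ i ∈ u ∩ Finset.range (L + 1), q i := by
          refine (Finset.sum_subset Finset.inter_subset_left ?_).symm
          intro i hiu hni
          simp only [Finset.mem_inter, Finset.mem_range, hiu, true_and, not_lt] at hni
          exact hqz i (by omega)
      _ ≤ ∑ i ∈ Finset.range (L + 1), q i :=
          Finset.sum_le_sum_of_subset_of_nonneg Finset.inter_subset_right
            (fun i _ _ => hq0' i)
  refine csSup_le ⟨∑ i ∈ Finset.range k, r i, Finset.range k, Finset.card_range k, rfl⟩ ?_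
  rintro x ⟨t, htc, rfl⟩
  set t1 := t.filter (fun i => i < m) with ht1def
  set t2 := t.filter (fun i => ¬ i < m) with ht2def
  have hab : t1.card + t2.card = k := by
    rw [← htc]; exact Finset.card_filter_add_card_filter_not _
  have ha : t1.card ≤ m := by
    have hsub : t1 ⊆ Finset.range m := by
      intro i hi
      simp only [ht1def, Finset.mem_filter] at hi
      simpa using hi.2
    simpa using Finset.card_le_card hsub
  set a := t1.card with hadef
  set b := t2.card with hbdef
  set s : Finset ℕ := Finset.range a ∪ Finset.Ico m (m + b) with hsdef
  have hdisj : Disjoint (Finset.range a) (Finset.Ico m (m + b)) := by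
    rw [Finset.disjoint_left]
    intro i hi hi2
    simp only [Finset.mem_range] at hi
    simp only [Finset.mem_Ico] at hi2
    omega
  have hscard : s.card = k := by
    rw [hsdef, Finset.card_union_of_disjoint hdisj, Finset.card_range, Nat.card_Ico]
    omega
  have h1 : ∑ i ∈ t1, r i ≤ ∑ i ∈ Finset.range a, q i := by
    have e : ∑ i ∈ t1, r i = ∑ i ∈ t1, p i :=
      Finset.sum_congr rfl fun i hi => hrlt i (by
        simp only [ht1def, Finset.mem_filter] at hi; exact hi.2)
    have e2 : ∑ i ∈ Finset.range a, q i = ∑ i ∈ Finset.range a, p i :=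
      Finset.sum_congr rfl fun i hi => hq0 i (by
        simp only [Finset.mem_range] at hi; omega)
    rw [e, e2]
    have h00 := sum_le_Ico_of_antitone p hmono a 0 t1 (fun i _ => Nat.zero_le i) rfl
    rw [Nat.zero_add, ← Finset.range_eq_Ico] at h00
    exact h00
  have h2 : ∑ i ∈ t2, r i ≤ ∑ i ∈ Finset.Ico m (m + b), q i := by
    have ht2m : ∀ i ∈ t2, m ≤ i := fun i hi => by
      simp only [ht2def, Finset.mem_filter] at hi; omega
    by_cases hcase : L + 1 ≤ m + b
    · have e : ∑ i ∈ Finset.Ico m (m + b), q i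
          = ∑ i ∈ Finset.Ico m (L + 1), q i + ∑ i ∈ Finset.Ico (L + 1) (m + b), q i :=
        (Finset.sum_Ico_consecutive _ (by omega) hcase).symm
      have ez : ∑ i ∈ Finset.Ico (L + 1) (m + b), q i = 0 :=
        Finset.sum_eq_zero fun i hi => hqz i (by
          simp only [Finset.mem_Ico] at hi; omega)
      rw [e, ez, hqIco, add_zero]
      exact htail t2 ht2m
    · by_cases hb : b = 0
      · have ht2e : t2 = ∅ := Finset.card_eq_zero.mp hb
        simp [ht2e, hb]
      · have hmb : m + b ≤ L := by omega
        have eq1 : ∑ i ∈ Finset.Ico m (m + b), q i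
            = (p m + ε) + ∑ i ∈ Finset.Ico (m + 1) (m + b), p i := by
          rw [Finset.sum_eq_sum_Ico_succ_bot (by omega : m < m + b), hqm]
          congr 1
          refine Finset.sum_congr rfl fun i hi => ?_
          simp only [Finset.mem_Ico] at hi
          exact hqmid i (by omega) (by omega)
        have eq2 : ∑ i ∈ Finset.Ico m (m + b), p i
            = p m + ∑ i ∈ Finset.Ico (m + 1) (m + b), p i :=
          Finset.sum_eq_sum_Ico_succ_bot (by omega : m < m + b) p
        have h3 : ∑ i ∈ t2, p i ≤ ∑ i ∈ Finset.Ico m (m + b), p i :=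
          sum_le_Ico_of_antitone p hmono b m t2 ht2m rfl
        have h4 : ∑ i ∈ t2, (r i - p i) ≤ ε := hpos t2
        have h5 : ∑ i ∈ t2, r i = ∑ i ∈ t2, p i + ∑ i ∈ t2, (r i - p i) := by
          rw [← Finset.sum_add_distrib]
          exact Finset.sum_congr rfl fun i _ => by ring
        linarith
  have hsum_s : ∑ i ∈ s, q i = ∑ i ∈ Finset.range a, q i + ∑ i ∈ Finset.Ico m (m + b), q i :=
    Finset.sum_union hdisj
  have hsplit : ∑ i ∈ t, r i = ∑ i ∈ t1, r i + ∑ i ∈ t2, r i :=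
    (Finset.sum_filter_add_sum_filter_not t _ r).symm
  have hfinal : ∑ i ∈ t, r i ≤ ∑ i ∈ s, q i := by
    rw [hsplit, hsum_s]; exact add_le_add h1 h2
  exact hfinal.trans (le_csSup hbdd ⟨s, hscard, rfl⟩)
end

section
/- Let f be a Schur concave function on probability distributions on ℕ, let p be a distribution in non-increasing order with f(p) finite, and m ∈ ℕ with p_1 + ... + p_m ≥ 1 − p_m. Define p^{(m)} by p^{(m)}_i = p_i for i ≤ m, p^{(m)}_{m+1} = 1 − ∑_{i=1}^m p_i, and 0 otherwise. Then sup{ f(p) − f(q) : q is m-partially majorized by p } = f(p) − f(p^{(m)}). -/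
open scoped BigOperators

lemma fin_le_strictMono {k : ℕ} {f : Fin k → ℕ} (hf : StrictMono f) :
    ∀ i : Fin k, (i : ℕ) ≤ f i := by
  rintro ⟨n, hn⟩
  induction n with
  | zero => exact Nat.zero_le _
  | succ n ih =>
    have h1 := ih (Nat.lt_of_succ_lt hn)
    have h2 := hf (show (⟨n, Nat.lt_of_succ_lt hn⟩ : Fin k) < ⟨n + 1, hn⟩ from
      by simp [Fin.lt_def])
    simpa using Nat.lt_of_le_of_lt h1 h2

/-- For an antitone sequence, any `k`-element sum is at most the sum of first `k`. -/
lemma sum_le_sum_range {p : ℕ → ℝ} (hmono : Antitone p) {t : Finset ℕ} {k : ℕ}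
    (ht : t.card = k) : ∑ i ∈ t, p i ≤ ∑ i ∈ Finset.range k, p i := by
  have h1 : ∑ i ∈ t, p i = ∑ i : Fin k, p (t.orderEmbOfFin ht i) := by
    rw [← Finset.sum_coe_sort t p]
    exact (Fintype.sum_equiv (t.orderIsoOfFin ht).toEquiv
      (fun x => p (t.orderEmbOfFin ht x)) (fun x => p x)
      (fun x => by simp [Finset.coe_orderIsoOfFin_apply])).symm
  rw [h1, Finset.sum_range fun i => p i]
  exact Finset.sum_le_sum fun i _ =>
    hmono (fin_le_strictMono (t.orderEmbOfFin ht).strictMono i)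

lemma topSum_bddAbove {p : ℕ → ℝ} (h0 : ∀ i, 0 ≤ p i) (hs : Summable p) (k : ℕ) :
    BddAbove {s : ℝ | ∃ t : Finset ℕ, t.card = k ∧ s = ∑ i ∈ t, p i} := by
  refine ⟨∑' i, p i, ?_⟩
  rintro s ⟨t, _, rfl⟩
  exact Summable.sum_le_tsum t (fun i _ => h0 i) hs

/-- For an antitone nonneg summable sequence, `topSum p k = ∑ i < k, p i`. -/
lemma topSum_eq {p : ℕ → ℝ} (hmono : Antitone p) (h0 : ∀ i, 0 ≤ p i)
    (hs : Summable p) (k : ℕ) : topSum p k = ∑ i ∈ Finset.range k, p i := by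
  apply le_antisymm
  · refine csSup_le ⟨∑ i ∈ Finset.range k, p i, ⟨Finset.range k, by simp⟩⟩ ?_
    rintro s ⟨t, ht, rfl⟩
    exact sum_le_sum_range hmono ht
  · exact le_csSup (topSum_bddAbove h0 hs k) ⟨Finset.range k, by simp⟩

lemma topSum_le_one {q : ℕ → ℝ} (hq : IsDistrib q) (k : ℕ) : topSum q k ≤ 1 := by
  refine csSup_le ⟨∑ i ∈ Finset.range k, q i, ⟨Finset.range k, by simp⟩⟩ ?_
  rintro s ⟨t, _, rfl⟩
  rw [← hq.2.2]
  exact Summable.sum_le_tsum t (fun i _ => hq.1 i) hq.2.1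

theorem schur_concave_sup_eq (f : (ℕ → ℝ) → ℝ)
    (hf : ∀ p q, IsDistrib p → IsDistrib q → Maj p q → f p ≤ f q)
    (p : ℕ → ℝ) (hmono : Antitone p) (hp : IsDistrib p)
    (m : ℕ) (hm : 1 ≤ m)
    (hcond : 1 - p (m - 1) ≤ ∑ i ∈ Finset.range m, p i)
    (pm : ℕ → ℝ)
    (hpmdef : pm = fun i => if i < m then p i
      else if i = m then 1 - ∑ j ∈ Finset.range m, p j else 0) :
    sSup {x : ℝ | ∃ q, IsDistrib q ∧ PMaj m p q ∧ x = f p - f q}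
      = f p - f pm := by
  obtain ⟨hp0, hps, hpt⟩ := hp
  -- basic facts about pm
  have hpsum_le : ∑ i ∈ Finset.range m, p i ≤ 1 := by
    rw [← hpt]; exact Summable.sum_le_tsum _ (fun i _ => hp0 i) hps
  have hr0 : 0 ≤ 1 - ∑ j ∈ Finset.range m, p j := by linarith
  have hrle : 1 - ∑ j ∈ Finset.range m, p j ≤ p (m - 1) := by linarith
  have hpm0 : ∀ i, 0 ≤ pm i := by
    intro i; rw [hpmdef]; dsimp only
    split_ifs with h1 h2
    · exact hp0 i
    · exact hr0
    · exact le_rfl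
  have hpm_mono : Antitone pm := by
    intro a b hab
    rw [hpmdef]; dsimp only
    by_cases hb : b < m
    · have ha : a < m := lt_of_le_of_lt hab hb
      simp only [ha, hb, if_true]
      exact hmono hab
    · by_cases hbm : b = m
      · rw [if_neg hb, if_pos hbm]
        by_cases ha : a < m
        · simp only [ha, if_true]
          exact le_trans hrle (hmono (show a ≤ m - 1 by omega))
        · have ham : a = m := by omega
          simp [ha, ham]
      · rw [if_neg hb, if_neg hbm]
        split_ifs with h1 h2
        · exact hp0 a
        · exact hr0
        · exact le_rfl
  have hpm_range : ∀ k, m + 1 ≤ k → ∑ i ∈ Finset.range k, pm i = 1 := by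
    intro k hk
    have : ∑ i ∈ Finset.range k, pm i = ∑ i ∈ Finset.range (m + 1), pm i := by
      rw [← Finset.sum_range_add_sum_Ico _ hk]
      have : ∑ i ∈ Finset.Ico (m + 1) k, pm i = 0 := by
        apply Finset.sum_eq_zero
        intro i hi
        rw [hpmdef]
        simp only [Finset.mem_Ico] at hi
        have h1 : ¬ i < m := by omega
        have h2 : i ≠ m := by omega
        simp [h1, h2]
      linarith
    rw [this, Finset.sum_range_succ]
    have heq : ∑ i ∈ Finset.range m, pm i = ∑ i ∈ Finset.range m, p i := by
      apply Finset.sum_congr rfl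
      intro i hi
      rw [hpmdef]
      simp only [Finset.mem_range] at hi
      simp [hi]
    rw [heq, hpmdef]
    simp
  have hpm_summable : Summable pm := by
    apply summable_of_ne_finset_zero (s := Finset.range (m + 1))
    intro i hi
    simp only [Finset.mem_range] at hi
    rw [hpmdef]
    have h1 : ¬ i < m := by omega
    have h2 : i ≠ m := by omega
    simp [h1, h2]
  have hpm_tsum : ∑' i, pm i = 1 := by
    rw [tsum_eq_sum (s := Finset.range (m + 1))]
    · exact hpm_range (m + 1) le_rfl
    · intro i hi
      simp only [Finset.mem_range] at hi
      rw [hpmdef]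
      have h1 : ¬ i < m := by omega
      have h2 : i ≠ m := by omega
      simp [h1, h2]
  have hpm_distrib : IsDistrib pm := ⟨hpm0, hpm_summable, hpm_tsum⟩
  -- topSum identities
  have htop_p : ∀ k, topSum p k = ∑ i ∈ Finset.range k, p i :=
    topSum_eq hmono hp0 hps
  have htop_pm : ∀ k, topSum pm k = ∑ i ∈ Finset.range k, pm i :=
    topSum_eq hpm_mono hpm0 hpm_summable
  have htop_eq : ∀ k ≤ m, topSum pm k = topSum p k := by
    intro k hk
    rw [htop_p, htop_pm]
    apply Finset.sum_congr rfl
    intro i hi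
    simp only [Finset.mem_range] at hi
    rw [hpmdef]
    have : i < m := lt_of_lt_of_le hi hk
    simp [this]
  have hpmaj : PMaj m p pm := fun k hk => (htop_eq k hk).le
  -- pm majorizes any q that is m-partially majorized by p
  have hmaj : ∀ q, IsDistrib q → PMaj m p q → Maj pm q := by
    intro q hq hpq k
    rcases le_or_gt k m with hk | hk
    · rw [htop_eq k hk]; exact hpq k hk
    · rw [htop_pm, hpm_range k hk]
      exact topSum_le_one hq k
  apply le_antisymm
  · refine csSup_le ⟨f p - f pm, ⟨pm, hpm_distrib, hpmaj, rfl⟩⟩ ?_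
    rintro x ⟨q, hq, hpq, rfl⟩
    have := hf pm q hpm_distrib hq (hmaj q hq hpq)
    linarith
  · apply le_csSup
    · refine ⟨f p - f pm, ?_⟩
      rintro x ⟨q, hq, hpq, rfl⟩
      have := hf pm q hpm_distrib hq (hmaj q hq hpq)
      linarith
    · exact ⟨pm, hpm_distrib, hpmaj, rfl⟩
end

section
/- Let f be a Schur concave function on probability distributions on ℕ and p a distribution in non-increasing order. For m ∈ ℕ define p^{(m)} by p^{(m)}_i = p_i for i ≤ m, p^{(m)}_{m+1} = 1 − ∑_{i=1}^m p_i, and 0 for i > m+1. Then for every distribution q that is m-partially majorized by p, f(q) ≥ f(p^{(m)}); equivalently f(p) − f(q) ≤ f(p) − f(p^{(m)}). -/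
open scoped BigOperators

lemma topSum_bdd (p : ℕ → ℝ) (hp0 : ∀ i, 0 ≤ p i) (hps : Summable p) (k : ℕ) :
    BddAbove {s : ℝ | ∃ t : Finset ℕ, t.card = k ∧ s = ∑ i ∈ t, p i} := by
  refine ⟨∑' i, p i, ?_⟩
  rintro s ⟨t, -, rfl⟩
  exact Summable.sum_le_tsum t (fun i _ => hp0 i) hps

lemma le_topSum (p : ℕ → ℝ) (hp0 : ∀ i, 0 ≤ p i) (hps : Summable p)
    (t : Finset ℕ) : ∑ i ∈ t, p i ≤ topSum p t.card :=
  le_csSup (topSum_bdd p hp0 hps _) ⟨t, rfl, rfl⟩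

lemma topSum_le_tsum (p : ℕ → ℝ) (hp0 : ∀ i, 0 ≤ p i) (hps : Summable p) (k : ℕ) :
    topSum p k ≤ ∑' i, p i := by
  refine csSup_le ⟨∑ i ∈ Finset.range k, p i, Finset.range k, Finset.card_range k, rfl⟩ ?_
  rintro s ⟨t, -, rfl⟩
  exact Summable.sum_le_tsum t (fun i _ => hp0 i) hps

lemma antitone_sum_le (p : ℕ → ℝ) (hmono : Antitone p) (t : Finset ℕ) :
    ∑ i ∈ t, p i ≤ ∑ i ∈ Finset.range t.card, p i := by
  set n := t.card with hn
  set g : Fin n ↪o ℕ := t.orderEmbOfFin hn.symm with hg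
  have key : ∀ r : ℕ, ∀ hr : r < n, (r : ℝ) = r → r ≤ g ⟨r, hr⟩ := by
    intro r
    induction r with
    | zero => intro hr _; exact Nat.zero_le _
    | succ r ih =>
      intro hr _
      have h1 := ih (by omega) rfl
      have h2 : g ⟨r, by omega⟩ < g ⟨r + 1, hr⟩ := g.strictMono (by simp [Fin.lt_def])
      omega
  have hsum : ∑ i ∈ t, p i = ∑ j : Fin n, p (g j) := by
    rw [← Finset.sum_attach t (fun i => p i)]
    refine (Fintype.sum_equiv (t.orderIsoOfFin hn.symm).toEquiv
      (fun j => p (g j)) (fun x : t => p x) fun j => ?_).symm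
    rw [hg]
    exact congrArg p (t.coe_orderIsoOfFin_apply hn.symm j).symm
  rw [hsum, ← Fin.sum_univ_eq_sum_range (fun j => p j) n]
  refine Finset.sum_le_sum fun j _ => hmono ?_
  exact key j.1 j.2 rfl

theorem schur_concave_bound (f : (ℕ → ℝ) → ℝ)
    (hf : ∀ p q, IsDistrib p → IsDistrib q → Maj p q → f p ≤ f q)
    (p : ℕ → ℝ) (hmono : Antitone p) (hp : IsDistrib p)
    (m : ℕ) (pm : ℕ → ℝ)
    (hpmdef : pm = fun i => if i < m then p i
      else if i = m then 1 - ∑ j ∈ Finset.range m, p j else 0) :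
    ∀ q, IsDistrib q → PMaj m p q → f pm ≤ f q ∧ f p - f q ≤ f p - f pm := by
  obtain ⟨hp0, hps, hpt⟩ := hp
  have hpartial : ∀ n, ∑ j ∈ Finset.range n, p j ≤ 1 := by
    intro n
    have h := Summable.sum_le_tsum (Finset.range n) (fun i _ => hp0 i) hps
    linarith [hpt ▸ h]
  have hzero : ∀ i ∉ Finset.range (m + 1), pm i = 0 := by
    intro i hi
    simp only [Finset.mem_range, not_lt] at hi
    rw [hpmdef]
    simp only []
    rw [if_neg (by omega), if_neg (by omega)]
  have hpm0 : ∀ i, 0 ≤ pm i := by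
    intro i
    rw [hpmdef]
    simp only []
    split_ifs with h1 h2
    · exact hp0 i
    · linarith [hpartial m]
    · exact le_refl 0
  have hpms : Summable pm := summable_of_ne_finset_zero hzero
  have hrangesum : ∀ k ≤ m, ∑ i ∈ Finset.range k, pm i = ∑ i ∈ Finset.range k, p i := by
    intro k hk
    refine Finset.sum_congr rfl fun i hi => ?_
    rw [Finset.mem_range] at hi
    rw [hpmdef]; simp only []; rw [if_pos (by omega)]
  have hpmsum1 : ∑ i ∈ Finset.range (m + 1), pm i = 1 := by
    rw [Finset.sum_range_succ, hrangesum m le_rfl]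
    have : pm m = 1 - ∑ j ∈ Finset.range m, p j := by
      rw [hpmdef]; simp
    rw [this]; ring
  have hpmt : ∑' i, pm i = 1 := by
    rw [tsum_eq_sum hzero, hpmsum1]
  have hpmd : IsDistrib pm := ⟨hpm0, hpms, hpmt⟩
  intro q hq hpq
  obtain ⟨hq0, hqs, hqt⟩ := hq
  have hmaj : Maj pm q := by
    intro k
    by_cases hk : k ≤ m
    · have h1 : topSum q k ≤ topSum p k := hpq k hk
      have h2 : topSum p k ≤ ∑ i ∈ Finset.range k, p i := by
        refine csSup_le ⟨∑ i ∈ Finset.range k, p i, Finset.range k, Finset.card_range k, rfl⟩ ?_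
        rintro s ⟨t, ht, rfl⟩
        have := antitone_sum_le p hmono t
        rwa [ht] at this
      have h3 : ∑ i ∈ Finset.range k, pm i ≤ topSum pm k := by
        have := le_topSum pm hpm0 hpms (Finset.range k)
        rwa [Finset.card_range] at this
      rw [hrangesum k hk] at h3
      linarith
    · have h1 : topSum q k ≤ 1 := by
        have := topSum_le_tsum q hq0 hqs k
        rwa [hqt] at this
      have h2 : (1 : ℝ) ≤ topSum pm k := by
        have hsub : Finset.range (m + 1) ⊆ Finset.range k := by
          apply Finset.range_subset_range.2; omega
        have heq : ∑ i ∈ Finset.range k, pm i = 1 := by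
          rw [← Finset.sum_subset hsub (fun i _ hi => hzero i hi), hpmsum1]
        have := le_topSum pm hpm0 hpms (Finset.range k)
        rw [Finset.card_range, heq] at this
        exact this
      linarith
  have hfle : f pm ≤ f q := hf pm q hpmd ⟨hq0, hqs, hqt⟩ hmaj
  exact ⟨hfle, by linarith⟩
end

section
/- For the Shannon entropy H(p) = ∑ η(p_i) with η(x) = −x ln x, and p a probability distribution in non-increasing order with H(p) < ∞, for any m ≥ 1: sup{ H(p) − H(q) : q m-partially majorized by p } ≤ Ŝ(p^{[m]}), where p^{[m]} = (p_{m+1}, p_{m+2}, ...) is the tail of p and Ŝ(r) := ∑_i η(r_i) − η(∑_i r_i) for a nonzero summable nonnegative sequence r. -/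
open scoped BigOperators

/-! Put `r = (p₀, …, p_{m-1}, ∑_{i ≥ m} pᵢ)`. Partial majorization of `q` by `p` up to `m` makes
`r` majorize `q`, so Schur concavity of the entropy gives `H(q) ≥ H(r)`, and `H(p) - H(r)` is the
right-hand side. Schur concavity comes from the representation
`x + η(x) = ∫₀¹ min(x, t) / t dt` for `0 ≤ x ≤ 1`: for sequences with equal totals, majorization
amounts to `∑ max(rⱼ - t, 0) ≥ ∑ max(qᵢ - t, 0)`, i.e. `∑ min(rⱼ, t) ≤ ∑ min(qᵢ, t)`, for all
`t > 0`, and integrating against `dt / t` compares `1 + H(r)` with `1 + H(q)`. -/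

open Finset Real MeasureTheory

lemma min_eq_sub_max_sub_zero (a t : ℝ) : min a t = a - max (a - t) 0 := by
  rw [← min_sub_sub_left, sub_sub_cancel, sub_zero, min_comm]

lemma Antitone.sum_le_sum_range_card {p : ℕ → ℝ} (hp : Antitone p) (t : Finset ℕ) :
    ∑ i ∈ t, p i ≤ ∑ j ∈ range #t, p j := by
  induction t using Finset.induction_on_max with
  | empty => simp
  | insert a s hlt ih =>
    have has : a ∉ s := fun h => (hlt a h).false
    have hcard : #s ≤ a := by
      simpa using card_le_card (fun x hx => mem_range.2 (hlt x hx) : s ⊆ range a)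
    rw [sum_insert has, card_insert_of_notMem has, sum_range_succ, add_comm]
    exact add_le_add ih (hp hcard)

lemma topSum_le_sum_range {p : ℕ → ℝ} (hp : Antitone p) (k : ℕ) :
    topSum p k ≤ ∑ j ∈ range k, p j :=
  csSup_le ⟨_, range k, card_range k, rfl⟩ <| by
    rintro s ⟨t, rfl, rfl⟩
    exact hp.sum_le_sum_range_card t

lemma sum_le_topSum {q : ℕ → ℝ} (hq0 : ∀ i, 0 ≤ q i) (hq : Summable q) (S : Finset ℕ) :
    ∑ i ∈ S, q i ≤ topSum q #S :=
  le_csSup ⟨∑' i, q i, by rintro s ⟨t, -, rfl⟩; exact hq.sum_le_tsum t fun i _ => hq0 i⟩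
    ⟨S, rfl, rfl⟩

lemma tsum_max_sub_le_sum_max_sub {q r : ℕ → ℝ} (hq : Summable q)
    {M : ℕ} (hqr : ∀ S : Finset ℕ, ∑ i ∈ S, q i ≤ ∑ j ∈ range (min #S M), r j)
    {t : ℝ} (ht : 0 < t) :
    ∑' i, max (q i - t) 0 ≤ ∑ j ∈ range M, max (r j - t) 0 := by
  have hfin : {i | t ≤ q i}.Finite := by
    simpa only [not_lt] using
      Filter.eventually_cofinite.1 (hq.tendsto_cofinite_zero.eventually (gt_mem_nhds ht))
  set S := hfin.toFinset
  have htsum : ∑' i, max (q i - t) 0 = ∑ i ∈ S, q i - #S * t := by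
    rw [tsum_eq_sum (s := S), ← nsmul_eq_mul, ← sum_const, ← sum_sub_distrib]
    · exact sum_congr rfl fun i hi => max_eq_left (by simpa [S] using hi)
    · intro i hi
      simp only [S, Set.Finite.mem_toFinset, Set.mem_ofPred_eq, not_le] at hi
      exact max_eq_right (by linarith)
  have hr : ∑ j ∈ range (min #S M), r j ≤ min #S M * t + ∑ j ∈ range M, max (r j - t) 0 :=
    calc ∑ j ∈ range (min #S M), r j
        ≤ ∑ j ∈ range (min #S M), (t + max (r j - t) 0) :=
          sum_le_sum fun j _ => by linarith [le_max_left (r j - t) 0]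
      _ ≤ min #S M * t + ∑ j ∈ range M, max (r j - t) 0 := by
          rw [sum_add_distrib, sum_const, card_range, nsmul_eq_mul]
          gcongr
          exact min_le_right _ _
  have hmin : ((min #S M : ℕ) : ℝ) * t ≤ #S * t := by gcongr; exact min_le_left _ _
  linarith [hqr S]

lemma sum_min_le_tsum_min {q r : ℕ → ℝ} (hq0 : ∀ i, 0 ≤ q i) (hq : Summable q) {M : ℕ}
    (hsum : ∑ j ∈ range M, r j = ∑' i, q i)
    (hqr : ∀ S : Finset ℕ, ∑ i ∈ S, q i ≤ ∑ j ∈ range (min #S M), r j) {t : ℝ} (ht : 0 < t) :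
    ∑ j ∈ range M, min (r j) t ≤ ∑' i, min (q i) t := by
  have hmax : Summable fun i => max (q i - t) 0 :=
    hq.of_nonneg_of_le (fun i => le_max_right _ _) fun i => max_le (by linarith) (hq0 i)
  simp only [min_eq_sub_max_sub_zero, sum_sub_distrib, hq.tsum_sub hmax, hsum]
  linarith [tsum_max_sub_le_sum_max_sub hq hqr ht]

lemma lintegral_min_div_eq {x : ℝ} (hx0 : 0 ≤ x) (hx1 : x ≤ 1) :
    ∫⁻ t in Set.Ioc 0 1, ENNReal.ofReal (min x t / t) = ENNReal.ofReal (x + negMulLog x) := by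
  rcases hx0.eq_or_lt with rfl | hx
  · rw [setLIntegral_congr_fun measurableSet_Ioc fun t ht => by rw [min_eq_left ht.1.le]]
    simp
  have hlow : ∫⁻ t in Set.Ioc 0 x, ENNReal.ofReal (min x t / t) = ENNReal.ofReal x := by
    rw [setLIntegral_congr_fun measurableSet_Ioc
      fun t ht => by rw [min_eq_right ht.2, div_self ht.1.ne', ENNReal.ofReal_one]]
    simp
  have hhigh : ∫⁻ t in Set.Ioc x 1, ENNReal.ofReal (min x t / t)
      = ENNReal.ofReal (negMulLog x) := by
    rw [setLIntegral_congr_fun measurableSet_Ioc fun t ht => by rw [min_eq_left ht.1.le]]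
    have hint : IntegrableOn (fun t => x / t) (Set.Ioc x 1) :=
      ((continuousOn_const.div continuousOn_id fun t ht => (hx.trans_le ht.1).ne').integrableOn_Icc
        ).mono_set Set.Ioc_subset_Icc_self
    rw [← ofReal_integral_eq_lintegral_ofReal hint, ← intervalIntegral.integral_of_le hx1]
    · simp [div_eq_mul_inv, integral_inv_of_pos hx one_pos, negMulLog]
    · exact (ae_restrict_iff' measurableSet_Ioc).2 <| .of_forall fun t ht =>
        div_nonneg hx.le (hx.trans ht.1).le
  rw [← Set.Ioc_union_Ioc_eq_Ioc hx.le hx1,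
    lintegral_union measurableSet_Ioc (Set.Ioc_disjoint_Ioc_of_le le_rfl), hlow, hhigh,
    ENNReal.ofReal_add hx.le (negMulLog_nonneg hx.le hx1)]

theorem sum_range_negMulLog_le_tsum_negMulLog {q r : ℕ → ℝ} (hq0 : ∀ i, 0 ≤ q i)
    (hq : Summable q) (hq1 : ∑' i, q i = 1) (hHq : Summable fun i => negMulLog (q i))
    (hr0 : ∀ j, 0 ≤ r j) {M : ℕ} (hr1 : ∑ j ∈ range M, r j = 1)
    (hqr : ∀ S : Finset ℕ, ∑ i ∈ S, q i ≤ ∑ j ∈ range (min #S M), r j) :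
    ∑ j ∈ range M, negMulLog (r j) ≤ ∑' i, negMulLog (q i) := by
  have hq_le : ∀ i, q i ≤ 1 := fun i => hq1 ▸ hq.le_tsum i fun j _ => hq0 j
  have hr_le : ∀ j ∈ range M, r j ≤ 1 := fun j hj =>
    hr1 ▸ single_le_sum (fun k _ => hr0 k) hj
  have hHq0 : ∀ i, 0 ≤ negMulLog (q i) := fun i => negMulLog_nonneg (hq0 i) (hq_le i)
  have hmeas : ∀ x : ℝ, Measurable fun t : ℝ => ENNReal.ofReal (min x t / t) := fun x =>
    ((measurable_const.min measurable_id).div measurable_id).ennreal_ofReal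
  have hpoint : ∀ t ∈ Set.Ioc (0 : ℝ) 1, ∑ j ∈ range M, ENNReal.ofReal (min (r j) t / t)
      ≤ ∑' i, ENNReal.ofReal (min (q i) t / t) := by
    rintro t ⟨ht, -⟩
    have hmin : Summable fun i => min (q i) t / t :=
      (hq.of_nonneg_of_le (fun i => le_min (hq0 i) ht.le) fun i => min_le_left _ _).div_const t
    rw [← ENNReal.ofReal_sum_of_nonneg fun j _ => div_nonneg (le_min (hr0 j) ht.le) ht.le,
      ← ENNReal.ofReal_tsum_of_nonneg (fun i => div_nonneg (le_min (hq0 i) ht.le) ht.le) hmin,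
      ← sum_div, tsum_div_const]
    gcongr
    exact sum_min_le_tsum_min hq0 hq (hr1.trans hq1.symm) hqr ht
  have key : ENNReal.ofReal (1 + ∑ j ∈ range M, negMulLog (r j))
      ≤ ENNReal.ofReal (1 + ∑' i, negMulLog (q i)) :=
    calc ENNReal.ofReal (1 + ∑ j ∈ range M, negMulLog (r j))
        = ∑ j ∈ range M, ENNReal.ofReal (r j + negMulLog (r j)) := by
          rw [← ENNReal.ofReal_sum_of_nonneg fun j hj =>
            add_nonneg (hr0 j) (negMulLog_nonneg (hr0 j) (hr_le j hj)), sum_add_distrib, hr1]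
      _ = ∑ j ∈ range M, ∫⁻ t in Set.Ioc 0 1, ENNReal.ofReal (min (r j) t / t) :=
          sum_congr rfl fun j hj => (lintegral_min_div_eq (hr0 j) (hr_le j hj)).symm
      _ = ∫⁻ t in Set.Ioc 0 1, ∑ j ∈ range M, ENNReal.ofReal (min (r j) t / t) :=
          (lintegral_finsetSum _ fun j _ => hmeas (r j)).symm
      _ ≤ ∫⁻ t in Set.Ioc 0 1, ∑' i, ENNReal.ofReal (min (q i) t / t) :=
          setLIntegral_mono' measurableSet_Ioc hpoint
      _ = ∑' i, ∫⁻ t in Set.Ioc 0 1, ENNReal.ofReal (min (q i) t / t) :=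
          lintegral_tsum fun i => (hmeas (q i)).aemeasurable
      _ = ∑' i, ENNReal.ofReal (q i + negMulLog (q i)) :=
          tsum_congr fun i => lintegral_min_div_eq (hq0 i) (hq_le i)
      _ = ENNReal.ofReal (1 + ∑' i, negMulLog (q i)) := by
          rw [← ENNReal.ofReal_tsum_of_nonneg (fun i => add_nonneg (hq0 i) (hHq0 i)) (hq.add hHq),
            hq.tsum_add hHq, hq1]
  have hH0 : 0 ≤ ∑' i, negMulLog (q i) := tsum_nonneg hHq0
  linarith [(ENNReal.ofReal_le_ofReal_iff (by linarith)).1 key]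

/-- The tail mass sits at index `m`; the entries past `m` are never used. -/
noncomputable def lumpTail (p : ℕ → ℝ) (m j : ℕ) : ℝ :=
  if j < m then p j else ∑' i, p (i + m)

lemma sum_range_succ_comp_lumpTail (f : ℝ → ℝ) (p : ℕ → ℝ) (m : ℕ) :
    ∑ j ∈ range (m + 1), f (lumpTail p m j) = ∑ j ∈ range m, f (p j) + f (∑' i, p (i + m)) := by
  rw [sum_range_succ, lumpTail, if_neg (lt_irrefl m)]
  exact congrArg (· + _) <| sum_congr rfl fun j hj => by rw [lumpTail, if_pos (mem_range.1 hj)]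

lemma lumpTail_nonneg {p : ℕ → ℝ} (hp : ∀ i, 0 ≤ p i) (m j : ℕ) : 0 ≤ lumpTail p m j := by
  unfold lumpTail
  split_ifs
  exacts [hp j, tsum_nonneg fun i => hp (i + m)]

lemma sum_range_succ_lumpTail {p : ℕ → ℝ} (hp : Summable p) (m : ℕ) :
    ∑ j ∈ range (m + 1), lumpTail p m j = ∑' i, p i := by
  simpa using sum_range_succ_comp_lumpTail id p m ▸ hp.sum_add_tsum_nat_add m

lemma sum_le_sum_range_lumpTail {p q : ℕ → ℝ} (hmono : Antitone p) (hp : IsDistrib p)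
    (hq : IsDistrib q) {m : ℕ} (hmaj : PMaj m p q) (S : Finset ℕ) :
    ∑ i ∈ S, q i ≤ ∑ j ∈ range (min #S (m + 1)), lumpTail p m j := by
  obtain ⟨hq0, hqs, hq1⟩ := hq
  rcases le_or_gt #S m with hS | hS
  · rw [min_eq_left (by omega)]
    calc ∑ i ∈ S, q i ≤ topSum q #S := sum_le_topSum hq0 hqs S
      _ ≤ topSum p #S := hmaj #S hS
      _ ≤ ∑ j ∈ range #S, p j := topSum_le_sum_range hmono #S
      _ = ∑ j ∈ range #S, lumpTail p m j :=
          sum_congr rfl fun j hj => (if_pos ((mem_range.1 hj).trans_le hS)).symm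
  · rw [min_eq_right (by omega), sum_range_succ_lumpTail hp.2.1, hp.2.2, ← hq1]
    exact hqs.sum_le_tsum S fun i _ => hq0 i

theorem entropy_pmaj_bound_general (p : ℕ → ℝ) (hmono : Antitone p) (hp : IsDistrib p)
    (hH : Summable fun i => Real.negMulLog (p i)) (m : ℕ) :
    sSup {x : ℝ | ∃ q, IsDistrib q ∧ (Summable fun i => Real.negMulLog (q i)) ∧
        PMaj m p q ∧
        x = (∑' i, Real.negMulLog (p i)) - ∑' i, Real.negMulLog (q i)}
      ≤ (∑' i, Real.negMulLog (p (i + m))) - Real.negMulLog (∑' i, p (i + m)) := by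
  refine csSup_le ⟨0, p, hp, hH, fun _ _ => le_rfl, (sub_self _).symm⟩ ?_
  rintro _ ⟨q, hq, hHq, hmaj, rfl⟩
  have hschur := sum_range_negMulLog_le_tsum_negMulLog hq.1 hq.2.1 hq.2.2 hHq
    (lumpTail_nonneg hp.1 m) ((sum_range_succ_lumpTail hp.2.1 m).trans hp.2.2)
    (sum_le_sum_range_lumpTail hmono hp hq hmaj)
  rw [sum_range_succ_comp_lumpTail] at hschur
  linarith [hH.sum_add_tsum_nat_add m]

theorem entropy_pmaj_bound (p : ℕ → ℝ) (hmono : Antitone p) (hp : IsDistrib p)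
    (hH : Summable fun i => Real.negMulLog (p i)) (m : ℕ) (hm : 1 ≤ m) :
    sSup {x : ℝ | ∃ q, IsDistrib q ∧ (Summable fun i => Real.negMulLog (q i)) ∧
        PMaj m p q ∧
        x = (∑' i, Real.negMulLog (p i)) - ∑' i, Real.negMulLog (q i)}
      ≤ (∑' i, Real.negMulLog (p (i + m))) - Real.negMulLog (∑' i, p (i + m)) :=
  entropy_pmaj_bound_general p hmono hp hH m
end

section
/- Let p be a probability distribution in non-increasing order with finite Shannon entropy H(p) = ∑ η(p_i) < ∞, where η(x) = −x ln x. Then Ŝ(p^{[m]}) := ∑_{i>m} η(p_i) − η(∑_{i>m} p_i) is non-increasing in m and tends to 0 as m → ∞. -/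
open scoped BigOperators

lemma negMulLog_add_le' {a b : ℝ} (ha : 0 ≤ a) (hb : 0 ≤ b) :
    Real.negMulLog (a + b) ≤ Real.negMulLog a + Real.negMulLog b := by
  rcases eq_or_lt_of_le ha with rfl | ha'
  · simp
  rcases eq_or_lt_of_le hb with rfl | hb'
  · simp
  have h1 : Real.log a ≤ Real.log (a + b) := Real.log_le_log ha' (by linarith)
  have h2 : Real.log b ≤ Real.log (a + b) := Real.log_le_log hb' (by linarith)
  simp only [Real.negMulLog]
  nlinarith

theorem tail_entropy_antitone_tendsto_zero (p : ℕ → ℝ) (hmono : Antitone p)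
    (hp : IsDistrib p) (hH : Summable fun i => Real.negMulLog (p i)) :
    Antitone (fun m : ℕ =>
        (∑' i, Real.negMulLog (p (i + m))) - Real.negMulLog (∑' i, p (i + m))) ∧
    Filter.Tendsto (fun m : ℕ =>
        (∑' i, Real.negMulLog (p (i + m))) - Real.negMulLog (∑' i, p (i + m)))
      Filter.atTop (nhds 0) := by
  obtain ⟨hpos, hsum, _⟩ := hp
  constructor
  · apply antitone_nat_of_succ_le
    intro m
    have hsumH : Summable fun i => Real.negMulLog (p (i + m)) :=
      (summable_nat_add_iff m).2 hH
    have hsump : Summable fun i => p (i + m) :=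
      (summable_nat_add_iff m).2 hsum
    have hA : (∑' i, Real.negMulLog (p (i + m))) =
        Real.negMulLog (p m) + ∑' i, Real.negMulLog (p (i + (m + 1))) := by
      rw [Summable.tsum_eq_zero_add hsumH]
      simp [add_assoc, add_comm 1 m]
    have hT : (∑' i, p (i + m)) = p m + ∑' i, p (i + (m + 1)) := by
      rw [Summable.tsum_eq_zero_add hsump]
      simp [add_assoc, add_comm 1 m]
    have hle : Real.negMulLog (p m + ∑' i, p (i + (m + 1))) ≤
        Real.negMulLog (p m) + Real.negMulLog (∑' i, p (i + (m + 1))) :=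
      negMulLog_add_le' (hpos m) (tsum_nonneg fun i => hpos _)
    simp only [hA, hT]
    linarith
  · have hA : Filter.Tendsto (fun m : ℕ => ∑' i, Real.negMulLog (p (i + m)))
        Filter.atTop (nhds 0) := tendsto_sum_nat_add fun i => Real.negMulLog (p i)
    have hT : Filter.Tendsto (fun m : ℕ => ∑' i, p (i + m))
        Filter.atTop (nhds 0) := tendsto_sum_nat_add p
    have hB : Filter.Tendsto (fun m : ℕ => Real.negMulLog (∑' i, p (i + m)))
        Filter.atTop (nhds 0) := by
      rw [← Real.negMulLog_zero]
      exact (Real.continuous_negMulLog.tendsto 0).comp hT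
    have h := hA.sub hB
    rw [sub_zero] at h
    exact h
end

section
/- Let p be a probability distribution in non-increasing order with ∑ p_i^α < ∞ for fixed α ∈ (1,∞), and let p^{(m)} be defined by p^{(m)}_i = p_i for i ≤ m, p^{(m)}_{m+1} = ∑_{i>m} p_i, and 0 otherwise. Then R_α(p) − R_α(p^{(m)}) = (α−1)^{-1} ln( 1 + ( (∑_{i>m} p_i)^α − ∑_{i>m} p_i^α ) / ∑_{i≥1} p_i^α ), and this quantity is ≤ (α−1)^{-1} ( (∑_{i>m} p_i)^α − ∑_{i>m} p_i^α ) / ∑_{i≥1} p_i^α. -/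
open scoped BigOperators

/-!
Merging the tail `(p_i)_{i>m}` into the single atom `∑_{i>m} p_i` raises the power sum
`∑ p_i^α` by `d = (∑_{i>m} p_i)^α − ∑_{i>m} p_i^α`, which is nonnegative because `t ↦ t^α` is
superadditive for `α ≥ 1`. Hence `R_α(p) − R_α(p^{(m)}) = (α−1)⁻¹ (ln (S + d) − ln S)` with
`S = ∑ p_i^α`, which is `(α−1)⁻¹ ln (1 + d/S)`, and `ln (1 + x) ≤ x` gives the bound.
-/

open Finset Real

/-- The truncated distribution `p^{(m)}`. -/
noncomputable def truncation (p : ℕ → ℝ) (m : ℕ) : ℕ → ℝ :=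
  fun i => if i < m then p i else if i = m then ∑' j, p (j + m) else 0

lemma rpow_le_mul_rpow_sub_one {x T α : ℝ} (hx : 0 ≤ x) (hxT : x ≤ T) (hα : 1 ≤ α) :
    x ^ α ≤ x * T ^ (α - 1) :=
  calc x ^ α = x * x ^ (α - 1) := by rw [← rpow_one_add' hx (by linarith), add_sub_cancel]
    _ ≤ x * T ^ (α - 1) := by gcongr

theorem tsum_rpow_le_rpow_tsum {ι : Type*} {f : ι → ℝ} (hf : ∀ i, 0 ≤ f i) (hsum : Summable f)
    {α : ℝ} (hα : 1 ≤ α) : ∑' i, f i ^ α ≤ (∑' i, f i) ^ α := by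
  set T := ∑' i, f i
  have hT : 0 ≤ T := tsum_nonneg hf
  have hbound (i : ι) : f i ^ α ≤ f i * T ^ (α - 1) :=
    rpow_le_mul_rpow_sub_one (hf i) (hsum.le_tsum i fun j _ => hf j) hα
  have hsum' : Summable fun i => f i * T ^ (α - 1) := hsum.mul_right _
  calc ∑' i, f i ^ α ≤ ∑' i, f i * T ^ (α - 1) :=
        (hsum'.of_nonneg_of_le (fun i => rpow_nonneg (hf i) α) hbound).tsum_le_tsum hbound hsum'
    _ = T * T ^ (α - 1) := tsum_mul_right
    _ = T ^ α := by rw [← rpow_one_add' hT (by linarith), add_sub_cancel]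

theorem tsum_rpow_truncation {α : ℝ} (hα : α ≠ 0) (p : ℕ → ℝ) (m : ℕ)
    (hps : Summable fun i => p i ^ α) :
    ∑' i, truncation p m i ^ α
      = ∑' i, p i ^ α + ((∑' j, p (j + m)) ^ α - ∑' j, p (j + m) ^ α) := by
  have hvanish : ∀ i ∉ range (m + 1), truncation p m i ^ α = 0 := by
    intro i hi
    simp only [mem_range, not_lt] at hi
    simp [truncation, show ¬ i < m by omega, show i ≠ m by omega, zero_rpow hα]
  have hhead : ∀ i ∈ range m, truncation p m i ^ α = p i ^ α := by
    intro i hi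
    simp [truncation, mem_range.mp hi]
  rw [tsum_eq_sum hvanish, sum_range_succ, sum_congr rfl hhead, ← hps.sum_add_tsum_nat_add m]
  simp [truncation]

namespace IsDistrib

variable {p : ℕ → ℝ}

lemma le_one (hp : IsDistrib p) (i : ℕ) : p i ≤ 1 :=
  hp.2.2 ▸ hp.2.1.le_tsum i fun j _ => hp.1 j

lemma summable_rpow (hp : IsDistrib p) {α : ℝ} (hα : 1 ≤ α) : Summable fun i => p i ^ α :=
  hp.2.1.of_nonneg_of_le (fun i => rpow_nonneg (hp.1 i) α)
    fun i => rpow_le_self_of_le_one (hp.1 i) (hp.le_one i) hα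

lemma exists_pos (hp : IsDistrib p) : ∃ i, 0 < p i := by
  by_contra! h
  have : ∑' i, p i ≤ 0 := tsum_nonpos h
  linarith [hp.2.2]

lemma tsum_rpow_pos (hp : IsDistrib p) {α : ℝ} (hα : 1 ≤ α) : 0 < ∑' i, p i ^ α := by
  obtain ⟨i, hi⟩ := hp.exists_pos
  exact (hp.summable_rpow hα).tsum_pos (fun j => rpow_nonneg (hp.1 j) α) i (rpow_pos_of_pos hi α)

end IsDistrib

lemma log_add_sub_log {S d : ℝ} (hS : 0 < S) (hd : 0 ≤ d) :
    log (S + d) - log S = log (1 + d / S) := by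
  rw [← log_div (by positivity) hS.ne', add_div, div_self hS.ne']

lemma inv_one_sub_mul_log_sub {α S d : ℝ} (hS : 0 < S) (hd : 0 ≤ d) :
    (1 - α)⁻¹ * log S - (1 - α)⁻¹ * log (S + d) = (α - 1)⁻¹ * log (1 + d / S) := by
  rw [← log_add_sub_log hS hd, show 1 - α = -(α - 1) by ring, inv_neg]
  ring

theorem renyi_truncation_formula_general (α : ℝ) (hα : 1 < α)
    (p : ℕ → ℝ) (hp : IsDistrib p) (m : ℕ)
    (pm : ℕ → ℝ)
    (hpmdef : pm = fun i => if i < m then p i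
      else if i = m then ∑' j : ℕ, p (j + m) else 0) :
    (1 - α)⁻¹ * Real.log (∑' i, p i ^ α)
        - (1 - α)⁻¹ * Real.log (∑' i, pm i ^ α)
      = (α - 1)⁻¹ * Real.log (1 +
          ((∑' j : ℕ, p (j + m)) ^ α - ∑' j : ℕ, p (j + m) ^ α)
            / ∑' i, p i ^ α) ∧
    (1 - α)⁻¹ * Real.log (∑' i, p i ^ α)
        - (1 - α)⁻¹ * Real.log (∑' i, pm i ^ α)
      ≤ (α - 1)⁻¹ * (((∑' j : ℕ, p (j + m)) ^ α - ∑' j : ℕ, p (j + m) ^ α)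
            / ∑' i, p i ^ α) := by
  have hS := hp.tsum_rpow_pos hα.le
  have hd : 0 ≤ (∑' j, p (j + m)) ^ α - ∑' j, p (j + m) ^ α :=
    sub_nonneg.2 <| tsum_rpow_le_rpow_tsum (fun j => hp.1 _)
      ((summable_nat_add_iff m).2 hp.2.1) hα.le
  have hpm : ∑' i, pm i ^ α
      = ∑' i, p i ^ α + ((∑' j, p (j + m)) ^ α - ∑' j, p (j + m) ^ α) :=
    hpmdef ▸ tsum_rpow_truncation (by linarith) p m (hp.summable_rpow hα.le)
  rw [hpm, inv_one_sub_mul_log_sub hS hd]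
  refine ⟨rfl, ?_⟩
  gcongr
  linarith [log_le_sub_one_of_pos (add_pos_of_pos_of_nonneg one_pos (div_nonneg hd hS.le))]

theorem renyi_truncation_formula (α : ℝ) (hα : 1 < α)
    (p : ℕ → ℝ) (hmono : Antitone p) (hp : IsDistrib p)
    (hps : Summable fun i => p i ^ α) (m : ℕ)
    (pm : ℕ → ℝ)
    (hpmdef : pm = fun i => if i < m then p i
      else if i = m then ∑' j : ℕ, p (j + m) else 0) :
    (1 - α)⁻¹ * Real.log (∑' i, p i ^ α)
        - (1 - α)⁻¹ * Real.log (∑' i, pm i ^ α)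
      = (α - 1)⁻¹ * Real.log (1 +
          ((∑' j : ℕ, p (j + m)) ^ α - ∑' j : ℕ, p (j + m) ^ α)
            / ∑' i, p i ^ α) ∧
    (1 - α)⁻¹ * Real.log (∑' i, p i ^ α)
        - (1 - α)⁻¹ * Real.log (∑' i, pm i ^ α)
      ≤ (α - 1)⁻¹ * (((∑' j : ℕ, p (j + m)) ^ α - ∑' j : ℕ, p (j + m) ^ α)
            / ∑' i, p i ^ α) :=
  renyi_truncation_formula_general α hα p hp m pm hpmdef
end
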